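/- arXiv:2104.14329 — 2 statements merged into one kernel-verified Lean document; each statement's English description precedes it below -/
import Mathlib

section
/- Let $\mathcal{K}_a \in \mathbb{R}^{N\times N}$ be a symmetric positive semidefinite kernel matrix with entries $\mathcal{K}_a(y_i,y_k)$, and let $Z$ be a symmetric positive semidefinite bi-stochastic matrix with $C_{il} = Z_{il} - \frac{1}{N}\sum_k Z_{ik}$. Then $\sum_{i,l} \mathcal{K}_a(y_l,y_i) C_{il} \geq 0$. -/
/-!
Because `Z` has unit row sums, the centering term `(1/N) ∑ₖ Z i k` is just `1/N`, so the sum is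
`tr (K_a C)` with `C = Z - J/N`, `J` the all-ones matrix. As `Z` fixes the all-ones vector,
Cauchy–Schwarz for the semi-inner product `⟨x, y⟩ = xᵀ Z y` against that vector gives
`(∑ xᵢ)² ≤ N xᵀ Z x`, i.e. `C` is positive semidefinite; and the trace of a product of two
positive semidefinite matrices is nonnegative.
-/

open Matrix

open scoped ComplexOrder MatrixOrder in
theorem Matrix.PosSemidef.trace_mul_nonneg {𝕜 n : Type*} [RCLike 𝕜] [Fintype n]
    {A B : Matrix n n 𝕜} (hA : A.PosSemidef) (hB : B.PosSemidef) : 0 ≤ (A * B).trace := by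
  classical
  obtain ⟨S, rfl⟩ := CStarAlgebra.nonneg_iff_eq_star_mul_self.mp hA.nonneg
  rw [star_eq_conjTranspose, Matrix.mul_assoc, trace_mul_comm]
  exact (hB.mul_mul_conjTranspose_same S).trace_nonneg

theorem Matrix.PosSemidef.dotProduct_mulVec_sq_le {n : Type*} [Fintype n]
    {Z : Matrix n n ℝ} (hZ : Z.PosSemidef) (x y : n → ℝ) :
    (x ⬝ᵥ Z *ᵥ y) ^ 2 ≤ (x ⬝ᵥ Z *ᵥ x) * (y ⬝ᵥ Z *ᵥ y) := by
  classical
  have hsymm : LinearMap.IsSymm Z.toBilin' :=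
    LinearMap.BilinForm.isSymm_iff.mp <|
      isSymm_toBilin'_iff_isSymm.mpr (by simpa using hZ.isHermitian)
  have hnonneg (v : n → ℝ) : 0 ≤ Z.toBilin' v v := by
    simpa [toBilin'_apply'] using hZ.dotProduct_mulVec_nonneg v
  simpa only [toBilin'_apply'] using Z.toBilin'.apply_sq_le_of_symm hnonneg hsymm x y

theorem Matrix.PosSemidef.sq_sum_le_card_mul_dotProduct_mulVec {n : Type*} [Fintype n]
    {Z : Matrix n n ℝ} (hZ : Z.PosSemidef) (hZ1 : Z *ᵥ 1 = 1) (x : n → ℝ) :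
    (∑ i, x i) ^ 2 ≤ Fintype.card n * (x ⬝ᵥ Z *ᵥ x) := by
  have := hZ.dotProduct_mulVec_sq_le x 1
  rw [hZ1, one_dotProduct_one, dotProduct_one] at this
  linarith

theorem Matrix.PosSemidef.sub_inv_card_smul_of_mulVec_one {n : Type*} [Fintype n]
    {Z : Matrix n n ℝ} (hZ : Z.PosSemidef) (hZ1 : Z *ᵥ 1 = 1) :
    (Z - (Fintype.card n : ℝ)⁻¹ • of fun _ _ ↦ 1).PosSemidef := by
  refine .of_dotProduct_mulVec_nonneg (hZ.isHermitian.sub ?_) fun x ↦ ?_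
  · exact (IsHermitian.ext fun _ _ ↦ by simp).smul (.all _)
  have hJ : x ⬝ᵥ (of fun _ _ ↦ (1 : ℝ)) *ᵥ x = (∑ i, x i) ^ 2 := by
    simp [dotProduct, mulVec, sq, Finset.mul_sum, mul_comm]
  rw [star_trivial, sub_mulVec, dotProduct_sub, smul_mulVec, dotProduct_smul, hJ, smul_eq_mul,
    sub_nonneg]
  rcases (Fintype.card n).eq_zero_or_pos with hn | hn
  · simpa [hn] using hZ.dotProduct_mulVec_nonneg x
  · rw [inv_mul_le_iff₀ (by positivity)]
    exact hZ.sq_sum_le_card_mul_dotProduct_mulVec hZ1 x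

theorem stmt5_general {N : ℕ} (Ka Z : Matrix (Fin N) (Fin N) ℝ)
    (hKa : Ka.PosSemidef)
    (hZpsd : Z.PosSemidef)
    (hrow : ∀ i, ∑ l, Z i l = 1) :
    0 ≤ ∑ i, ∑ l, Ka l i * (Z i l - (1 / (N : ℝ)) * ∑ k, Z i k) := by
  have hZ1 : Z *ᵥ 1 = 1 := funext fun i ↦ by simp [mulVec, dotProduct, hrow]
  have hC := hZpsd.sub_inv_card_smul_of_mulVec_one hZ1
  rw [Fintype.card_fin] at hC
  calc (0 : ℝ) ≤ (Ka * (Z - (N : ℝ)⁻¹ • of fun _ _ ↦ 1)).trace := hKa.trace_mul_nonneg hC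
    _ = _ := by
      simp only [trace, Matrix.diag, mul_apply, Matrix.sub_apply, Matrix.smul_apply, of_apply,
        hrow, one_div, smul_eq_mul, mul_one]
      exact Finset.sum_comm

/-- Nonnegativity of the data-driven test component of Problem 1:
the inner product of a PSD kernel matrix `K_a` with the centered matrix
`C_{il} = Z_{il} - (1/N) ∑_k Z_{ik}` built from a symmetric PSD bi-stochastic `Z`
is nonnegative. -/
theorem stmt5 {N : ℕ} (Ka Z : Matrix (Fin N) (Fin N) ℝ)
    (hKa : Ka.PosSemidef)
    (hZpsd : Z.PosSemidef) (hZsymm : Z.IsSymm)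
    (hZnn : ∀ i l, 0 ≤ Z i l)
    (hrow : ∀ i, ∑ l, Z i l = 1) (hcol : ∀ l, ∑ i, Z i l = 1) :
    0 ≤ ∑ i, ∑ l, Ka l i * (Z i l - (1 / (N : ℝ)) * ∑ k, Z i k) :=
  stmt5_general Ka Z hKa hZpsd hrow
end

section
/- Let $Z$ be a symmetric positive semidefinite bi-stochastic $N\times N$ matrix, $C_{ki} = Z_{ki} - \frac{1}{N}\sum_j Z_{kj}$, and $f:\mathbb{R}^d\to\mathbb{R}$ any function. Then for any points $y_1,\dots,y_N\in\mathbb{R}^d$, $\sum_{i,k} f(y_i) f(y_k) C_{ki} \geq 0$. -/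
/-!
If the rows of `Z` sum to one, the quadratic form of the centred matrix at `v` is
`vᵀ Z v - (∑ v)² / N`. Since `Z` is symmetric its columns sum to one as well, so this is
exactly the quadratic form of `Z` at the centred vector `v - (∑ v / N) • 1`, which is
nonnegative because `Z` is positive semidefinite.
-/

open Finset Matrix

theorem Matrix.PosSemidef.sq_sum_div_card_le_dotProduct_mulVec {n : Type*} [Fintype n]
    {Z : Matrix n n ℝ} (hZ : Z.PosSemidef) (hrow : Z *ᵥ 1 = 1) (v : n → ℝ) :
    (∑ i, v i) ^ 2 / Fintype.card n ≤ v ⬝ᵥ Z *ᵥ v := by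
  have hcol : 1 ᵥ* Z = 1 := by
    rw [← hZ.isHermitian.eq, conjTranspose_eq_transpose_of_trivial, vecMul_transpose, hrow]
  have key := hZ.dotProduct_mulVec_nonneg (v - ((∑ i, v i) / Fintype.card n) • 1)
  simp only [star_trivial, mulVec_sub, mulVec_smul, hrow, sub_dotProduct, dotProduct_sub,
    smul_dotProduct, dotProduct_smul, dotProduct_mulVec 1, hcol, dotProduct_one,
    one_dotProduct, smul_eq_mul, Pi.sub_apply, Pi.smul_apply, Pi.one_apply, sum_sub_distrib,
    mul_one, sum_const, card_univ, nsmul_eq_mul] at key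
  rcases eq_or_ne (Fintype.card n : ℝ) 0 with hN | hN
  · simpa [hN] using hZ.dotProduct_mulVec_nonneg v
  · rw [mul_div_cancel₀ _ hN, sub_self, mul_zero, sub_zero] at key
    rw [sq, mul_div_right_comm]
    linarith

theorem Matrix.sum_sum_mul_sub_rowSum_div_card {n : Type*} [Fintype n] (Z : Matrix n n ℝ)
    (hrow : ∀ k, ∑ i, Z k i = 1) (v : n → ℝ) :
    ∑ i, ∑ k, v i * v k * (Z k i - (1 / (Fintype.card n : ℝ)) * ∑ j, Z k j) =
      v ⬝ᵥ Z *ᵥ v - (∑ i, v i) ^ 2 / Fintype.card n := by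
  simp only [hrow, mul_one, mul_sub, sum_sub_distrib]
  congr 1
  · simp only [dotProduct, mulVec, mul_sum]
    rw [sum_comm]
    exact sum_congr rfl fun k _ => sum_congr rfl fun i _ => by ring
  · simp only [sq, sum_mul_sum, sum_div, mul_one_div]

theorem stmt6_general {N d : ℕ} (Z : Matrix (Fin N) (Fin N) ℝ)
    (hZpsd : Z.PosSemidef)
    (hrow : ∀ k, ∑ i, Z k i = 1)
    (f : (Fin d → ℝ) → ℝ) (y : Fin N → (Fin d → ℝ)) :
    0 ≤ ∑ i, ∑ k, f (y i) * f (y k) * (Z k i - (1 / (N : ℝ)) * ∑ j, Z k j) := by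
  have hmulVec_one : Z *ᵥ 1 = 1 := funext fun k => by simpa [mulVec, dotProduct] using hrow k
  have := Z.sum_sum_mul_sub_rowSum_div_card hrow fun i => f (y i)
  rw [Fintype.card_fin] at this
  rw [this, sub_nonneg]
  simpa using hZpsd.sq_sum_div_card_le_dotProduct_mulVec hmulVec_one fun i => f (y i)

/-- Nonnegativity of the data-driven test term in Problem 2: the quadratic form of the
centered matrix `C_{ki} = Z_{ki} - (1/N) ∑_j Z_{kj}` at the vector `(f(y_1),…,f(y_N))`
is nonnegative. -/
theorem stmt6 {N d : ℕ} (Z : Matrix (Fin N) (Fin N) ℝ)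
    (hZpsd : Z.PosSemidef) (hZsymm : Z.IsSymm)
    (hZnn : ∀ k i, 0 ≤ Z k i)
    (hrow : ∀ k, ∑ i, Z k i = 1) (hcol : ∀ i, ∑ k, Z k i = 1)
    (f : (Fin d → ℝ) → ℝ) (y : Fin N → (Fin d → ℝ)) :
    0 ≤ ∑ i, ∑ k, f (y i) * f (y k) * (Z k i - (1 / (N : ℝ)) * ∑ j, Z k j) :=
  stmt6_general Z hZpsd hrow f y
end
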